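/- Let k ≥ 2 be an integer, λ > 0 a real number, and m ≥ 1 an integer such that both 0 and m are modes of the Poisson distribution of order k with parameter λ. Then k ≤ m < κ, where κ = k(k+1)/2. -/

import Mathlib

/-- Scaled pmf of the Poisson distribution of order `k`:
`h_k(n;λ) = Σ λ^(n₁+⋯+n_k)/(n₁!⋯n_k!)`, summed over all `k`-tuples `(n₁,…,n_k)`
of nonnegative integers with `n₁ + 2n₂ + ⋯ + k·n_k = n`.
(Each `n_i` is at most `n` whenever the constraint holds, so the range is exhaustive.) -/
noncomputable def poissonOrderH (k n : ℕ) (lam : ℝ) : ℝ :=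
  ∑ t ∈ (Fintype.piFinset fun _ : Fin k => Finset.range (n + 1)) |>.filter
      (fun t => ∑ i : Fin k, ((i : ℕ) + 1) * t i = n),
    lam ^ (∑ i : Fin k, t i) / ∏ i : Fin k, (Nat.factorial (t i) : ℝ)

/-- Pmf of the Poisson distribution of order `k`: `f_k(n;λ) = e^{-kλ} h_k(n;λ)`. -/
noncomputable def poissonOrderPmf (k n : ℕ) (lam : ℝ) : ℝ :=
  Real.exp (-(k * lam)) * poissonOrderH k n lam

/-- `m` is a mode of the Poisson distribution of order `k` with parameter `lam`. -/
def IsMode (k : ℕ) (lam : ℝ) (m : ℕ) : Prop :=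
  ∀ n : ℕ, poissonOrderPmf k n lam ≤ poissonOrderPmf k m lam

/-!
Write `h n = e^{kλ} f_k(n; λ)` as a sum over partitions of `n` into parts of size at most `k`,
a partition with `tᵢ` parts of size `i` contributing `∏ᵢ λ^{tᵢ} / tᵢ!`. If `0` is a mode then
`h ≤ h 0 = 1`, and if `m` is a mode as well then `h m = 1`.

For `1 ≤ n < k`, raising one largest part of a partition of `n` by `k - n` is an injection into
the partitions of `k` which multiplies the contribution by the multiplicity of that part, and
which misses the partition `1^k`; hence `h n + λ^k / k! ≤ h k`. For `n = m < k` this contradicts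
`h m = 1 ≥ h k`, and for `n = 1` it gives `λ < 1`.

Removing one part of size `i` gives `n h n ≤ λ ∑ᵢ i h (n - i) ≤ λ κ`, so `m = m h m ≤ λ κ < κ`.
-/

lemma IsMode.poissonOrderH_le {k : ℕ} {lam : ℝ} {m : ℕ} (h : IsMode k lam m) (n : ℕ) :
    poissonOrderH k n lam ≤ poissonOrderH k m lam :=
  le_of_mul_le_mul_left (h n) (Real.exp_pos _)

namespace PoissonOrder

open Finset Nat

variable {k : ℕ}

/-- `t i` counts the parts of size `i + 1` of a partition of `tupleWeight t`. -/
def tupleWeight (t : Fin k → ℕ) : ℕ := ∑ i : Fin k, ((i : ℕ) + 1) * t i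

noncomputable def tupleTerm (lam : ℝ) (t : Fin k → ℕ) : ℝ := ∏ i : Fin k, lam ^ t i / (t i)!

def tuples (k n : ℕ) : Finset (Fin k → ℕ) :=
  (Fintype.piFinset fun _ : Fin k => range (n + 1)).filter fun t => tupleWeight t = n

lemma tupleWeight_add_single (s : Fin k → ℕ) (i : Fin k) (c : ℕ) :
    tupleWeight (s + Pi.single i c) = tupleWeight s + ((i : ℕ) + 1) * c := by
  simp [tupleWeight, mul_add, sum_add_distrib, Pi.single_apply]

lemma tupleWeight_single (i : Fin k) (c : ℕ) : tupleWeight (Pi.single i c) = ((i : ℕ) + 1) * c := by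
  simpa [tupleWeight] using tupleWeight_add_single 0 i c

lemma mem_tuples {n : ℕ} {t : Fin k → ℕ} : t ∈ tuples k n ↔ tupleWeight t = n := by
  refine ⟨fun h => (mem_filter.1 h).2, fun h => mem_filter.2 ⟨?_, h⟩⟩
  refine Fintype.mem_piFinset.2 fun i => mem_range.2 (Nat.lt_succ_of_le ?_)
  calc t i ≤ ((i : ℕ) + 1) * t i := Nat.le_mul_of_pos_left _ i.val.succ_pos
    _ ≤ n := h ▸ single_le_sum (f := fun j : Fin k => ((j : ℕ) + 1) * t j) (by simp) (mem_univ i)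

lemma poissonOrderH_eq_sum (n : ℕ) (lam : ℝ) :
    poissonOrderH k n lam = ∑ t ∈ tuples k n, tupleTerm lam t := by
  refine sum_congr rfl fun t _ => ?_
  rw [tupleTerm, prod_div_distrib, prod_pow_eq_pow_sum]

lemma tupleTerm_nonneg {lam : ℝ} (hlam : 0 ≤ lam) (t : Fin k → ℕ) : 0 ≤ tupleTerm lam t :=
  prod_nonneg fun _ _ => by positivity

lemma tupleTerm_single (lam : ℝ) (i : Fin k) (c : ℕ) :
    tupleTerm lam (Pi.single i c) = lam ^ c / c ! := by
  rw [tupleTerm, Fintype.prod_eq_single i fun j hj => by simp [hj]]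
  simp

lemma tupleTerm_add_single (lam : ℝ) (s : Fin k → ℕ) (i : Fin k) :
    tupleTerm lam (s + Pi.single i 1) = tupleTerm lam s * (lam / (s i + 1)) := by
  rw [tupleTerm, tupleTerm, ← Fintype.prod_pi_mulSingle' i (lam / (s i + 1)), ← prod_mul_distrib]
  refine prod_congr rfl fun j _ => ?_
  rcases eq_or_ne j i with rfl | hj
  · simp only [Pi.add_apply, Pi.single_eq_same, Pi.mulSingle_eq_same, pow_succ, factorial_succ]
    push_cast
    field_simp
  · simp [hj]

lemma sub_single_add_single {t : Fin k → ℕ} {i : Fin k} (h : t i ≠ 0) :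
    t - Pi.single i 1 + Pi.single i 1 = t := by
  ext j
  rcases eq_or_ne j i with rfl | hj
  · simp only [Pi.add_apply, Pi.sub_apply, Pi.single_eq_same]
    omega
  · simp [hj]

lemma tupleTerm_le_poissonOrderH {lam : ℝ} (hlam : 0 ≤ lam) (t : Fin k → ℕ) :
    tupleTerm lam t ≤ poissonOrderH k (tupleWeight t) lam := by
  rw [poissonOrderH_eq_sum]
  exact single_le_sum (fun u _ => tupleTerm_nonneg hlam u) (mem_tuples.2 rfl)

lemma poissonOrderH_zero (k : ℕ) (lam : ℝ) : poissonOrderH k 0 lam = 1 := by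
  have : tuples k 0 = {0} := by
    ext t
    simp [mem_tuples, tupleWeight, funext_iff]
  simp [poissonOrderH_eq_sum, this, tupleTerm]

lemma sum_mul_tupleTerm_le {lam : ℝ} (hlam : 0 ≤ lam) (n : ℕ) (i : Fin k) :
    ∑ t ∈ tuples k n, (t i : ℝ) * tupleTerm lam t
      ≤ lam * poissonOrderH k (n - ((i : ℕ) + 1)) lam := by
  have hsub : (tuples k n).filter (fun t => t i ≠ 0)
      ⊆ (tuples k (n - ((i : ℕ) + 1))).image (· + Pi.single i 1) := by
    intro t ht
    obtain ⟨ht, hti⟩ := mem_filter.1 ht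
    refine mem_image.2 ⟨t - Pi.single i 1, mem_tuples.2 ?_, sub_single_add_single hti⟩
    have := tupleWeight_add_single (t - Pi.single i 1) i 1
    rw [sub_single_add_single hti, mem_tuples.1 ht] at this
    omega
  calc ∑ t ∈ tuples k n, (t i : ℝ) * tupleTerm lam t
      = ∑ t ∈ (tuples k n).filter (fun t => t i ≠ 0), (t i : ℝ) * tupleTerm lam t :=
        (sum_filter_of_ne fun t _ h => by simpa using left_ne_zero_of_mul h).symm
    _ ≤ ∑ t ∈ (tuples k (n - ((i : ℕ) + 1))).image (· + Pi.single i 1),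
          (t i : ℝ) * tupleTerm lam t :=
        sum_le_sum_of_subset_of_nonneg hsub fun t _ _ =>
          mul_nonneg (t i).cast_nonneg (tupleTerm_nonneg hlam t)
    _ = ∑ s ∈ tuples k (n - ((i : ℕ) + 1)), lam * tupleTerm lam s := by
        rw [sum_image fun s _ s' _ => add_right_cancel]
        refine sum_congr rfl fun s _ => ?_
        rw [tupleTerm_add_single]
        simp only [Pi.add_apply, Pi.single_eq_same, cast_add, cast_one]
        field_simp
    _ = lam * poissonOrderH k (n - ((i : ℕ) + 1)) lam := by
        rw [poissonOrderH_eq_sum, mul_sum]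

lemma natCast_mul_poissonOrderH_le {lam : ℝ} (hlam : 0 ≤ lam) (n : ℕ) :
    n * poissonOrderH k n lam
      ≤ lam * ∑ i : Fin k, ((i : ℝ) + 1) * poissonOrderH k (n - ((i : ℕ) + 1)) lam := by
  have hn : ∀ t ∈ tuples k n, (n : ℝ) = ∑ i : Fin k, ((i : ℝ) + 1) * t i := fun t ht => by
    rw [← mem_tuples.1 ht, tupleWeight]
    push_cast
    rfl
  calc n * poissonOrderH k n lam
      = ∑ i : Fin k, ((i : ℝ) + 1) * ∑ t ∈ tuples k n, (t i : ℝ) * tupleTerm lam t := by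
        simp_rw [poissonOrderH_eq_sum, mul_sum]
        rw [sum_comm]
        refine sum_congr rfl fun t ht => ?_
        rw [hn t ht, sum_mul]
        exact sum_congr rfl fun i _ => by ring
    _ ≤ ∑ i : Fin k, ((i : ℝ) + 1) * (lam * poissonOrderH k (n - ((i : ℕ) + 1)) lam) :=
        sum_le_sum fun i _ =>
          mul_le_mul_of_nonneg_left (sum_mul_tupleTerm_le hlam n i) (by positivity)
    _ = lam * ∑ i : Fin k, ((i : ℝ) + 1) * poissonOrderH k (n - ((i : ℕ) + 1)) lam := by
        rw [mul_sum]
        exact sum_congr rfl fun i _ => by ring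

lemma sum_fin_val_add_one (k : ℕ) : ∑ i : Fin k, ((i : ℕ) + 1) = k * (k + 1) / 2 := by
  have h := sum_range_id (k + 1)
  rw [sum_range_succ'] at h
  simpa [Fin.sum_univ_eq_sum_range (· + 1), mul_comm] using h

lemma natCast_mul_poissonOrderH_le_of_le_one {lam : ℝ} (hlam : 0 ≤ lam)
    (hle : ∀ j, poissonOrderH k j lam ≤ 1) (n : ℕ) :
    n * poissonOrderH k n lam ≤ lam * (k * (k + 1) / 2 : ℕ) := by
  refine (natCast_mul_poissonOrderH_le hlam n).trans (mul_le_mul_of_nonneg_left ?_ hlam)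
  rw [← sum_fin_val_add_one]
  push_cast
  exact sum_le_sum fun i _ => mul_le_of_le_one_right (by positivity) (hle _)

section RaiseTop

variable [NeZero k]

noncomputable def topIndex (t : Fin k → ℕ) : Fin k := (univ.filter (t · ≠ 0)).sup id

lemma le_topIndex {t : Fin k → ℕ} {i : Fin k} (h : t i ≠ 0) : i ≤ topIndex t :=
  le_sup (f := id) (mem_filter.2 ⟨mem_univ i, h⟩)

lemma topIndex_eq {t : Fin k → ℕ} {i : Fin k} (hi : t i ≠ 0) (h : ∀ j, t j ≠ 0 → j ≤ i) :
    topIndex t = i :=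
  le_antisymm (Finset.sup_le fun j hj => h j (mem_filter.1 hj).2) (le_topIndex hi)

lemma apply_eq_zero_of_topIndex_lt {t : Fin k → ℕ} {i : Fin k} (h : topIndex t < i) : t i = 0 :=
  by_contra fun hi => (le_topIndex hi).not_gt h

lemma apply_topIndex_ne_zero {t : Fin k → ℕ} (ht : tupleWeight t ≠ 0) : t (topIndex t) ≠ 0 := by
  obtain ⟨i, hi⟩ := Function.ne_iff.1 fun h : t = 0 => ht (by simp [h, tupleWeight])
  obtain ⟨j, hj, hsup⟩ := exists_mem_eq_sup (univ.filter (t · ≠ 0)) ⟨i, by simpa using hi⟩ id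
  rw [topIndex, hsup]
  exact (mem_filter.1 hj).2

lemma topIndex_lt {t : Fin k → ℕ} {n : ℕ} (ht : tupleWeight t = n) (hn : n ≠ 0) :
    (topIndex t : ℕ) < n := by
  have htop : t (topIndex t) ≠ 0 := apply_topIndex_ne_zero (ht ▸ hn)
  have := single_le_sum (f := fun j : Fin k => ((j : ℕ) + 1) * t j) (by simp)
    (mem_univ (topIndex t))
  rw [← tupleWeight, ht] at this
  nlinarith [Nat.one_le_iff_ne_zero.2 htop]

noncomputable def raisedIndex (d : ℕ) (t : Fin k → ℕ) : Fin k := Fin.ofNat k (topIndex t + d)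

/-- In partition language: one largest part of `t` is replaced by a part larger by `d`. -/
noncomputable def raiseTop (d : ℕ) (t : Fin k → ℕ) : Fin k → ℕ :=
  t - Pi.single (topIndex t) 1 + Pi.single (raisedIndex d t) 1

variable {n : ℕ} {t : Fin k → ℕ}

lemma val_raisedIndex (ht : tupleWeight t = n) (hn : n ≠ 0) (hnk : n < k) :
    (raisedIndex (k - n) t : ℕ) = topIndex t + (k - n) := by
  have := topIndex_lt ht hn
  rw [raisedIndex, Fin.val_ofNat, Nat.mod_eq_of_lt (by omega)]

lemma topIndex_lt_raisedIndex (ht : tupleWeight t = n) (hn : n ≠ 0) (hnk : n < k) :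
    topIndex t < raisedIndex (k - n) t := by
  rw [Fin.lt_def, val_raisedIndex ht hn hnk]
  omega

lemma raiseTop_apply_raisedIndex (ht : tupleWeight t = n) (hn : n ≠ 0) (hnk : n < k) :
    raiseTop (k - n) t (raisedIndex (k - n) t) = 1 := by
  have hlt := topIndex_lt_raisedIndex ht hn hnk
  simp [raiseTop, apply_eq_zero_of_topIndex_lt hlt, hlt.ne']

lemma topIndex_raiseTop (ht : tupleWeight t = n) (hn : n ≠ 0) (hnk : n < k) :
    topIndex (raiseTop (k - n) t) = raisedIndex (k - n) t := by
  refine topIndex_eq (by simp [raiseTop_apply_raisedIndex ht hn hnk]) fun j hj => ?_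
  by_contra! hlt
  have hJj := (topIndex_lt_raisedIndex ht hn hnk).trans hlt
  simp [raiseTop, apply_eq_zero_of_topIndex_lt hJj, hJj.ne', hlt.ne'] at hj

lemma tupleWeight_raiseTop (ht : tupleWeight t = n) (hn : n ≠ 0) (hnk : n < k) :
    tupleWeight (raiseTop (k - n) t) = k := by
  have hdecomp := tupleWeight_add_single (t - Pi.single (topIndex t) 1) (topIndex t) 1
  rw [sub_single_add_single (apply_topIndex_ne_zero (ht ▸ hn))] at hdecomp
  rw [raiseTop, tupleWeight_add_single, val_raisedIndex ht hn hnk]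
  omega

lemma tupleTerm_le_tupleTerm_raiseTop {lam : ℝ} (hlam : 0 ≤ lam) (ht : tupleWeight t = n)
    (hn : n ≠ 0) (hnk : n < k) : tupleTerm lam t ≤ tupleTerm lam (raiseTop (k - n) t) := by
  set s := t - Pi.single (topIndex t) 1
  have hs : s (raisedIndex (k - n) t) = 0 := by
    have hlt := topIndex_lt_raisedIndex ht hn hnk
    simp [s, apply_eq_zero_of_topIndex_lt hlt, hlt.ne']
  calc tupleTerm lam t = tupleTerm lam s * (lam / (s (topIndex t) + 1)) := by
        rw [← tupleTerm_add_single, sub_single_add_single (apply_topIndex_ne_zero (ht ▸ hn))]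
    _ ≤ tupleTerm lam s * lam :=
        mul_le_mul_of_nonneg_left (div_le_self hlam (by simp)) (tupleTerm_nonneg hlam s)
    _ = tupleTerm lam (raiseTop (k - n) t) := by
        change _ = tupleTerm lam (s + Pi.single (raisedIndex (k - n) t) 1)
        rw [tupleTerm_add_single, hs]
        simp

lemma raiseTop_injOn (hn : n ≠ 0) (hnk : n < k) :
    Set.InjOn (raiseTop (k - n)) (tuples k n : Set (Fin k → ℕ)) := by
  intro t ht t' ht' h
  rw [mem_coe, mem_tuples] at ht ht'
  have hJ' : raisedIndex (k - n) t = raisedIndex (k - n) t' := by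
    rw [← topIndex_raiseTop ht hn hnk, h, topIndex_raiseTop ht' hn hnk]
  have hJ : topIndex t = topIndex t' := by
    have := congrArg Fin.val hJ'
    rw [val_raisedIndex ht hn hnk, val_raisedIndex ht' hn hnk] at this
    exact Fin.ext (by omega)
  have hs : t - Pi.single (topIndex t) 1 = t' - Pi.single (topIndex t') 1 := by
    rw [raiseTop, raiseTop, hJ'] at h
    exact add_right_cancel h
  calc t = t - Pi.single (topIndex t) 1 + Pi.single (topIndex t) 1 :=
        (sub_single_add_single (apply_topIndex_ne_zero (ht ▸ hn))).symm
    _ = t' - Pi.single (topIndex t') 1 + Pi.single (topIndex t') 1 := by rw [hs, hJ]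
    _ = t' := sub_single_add_single (apply_topIndex_ne_zero (ht' ▸ hn))

lemma raiseTop_ne_single_zero (ht : tupleWeight t = n) (hn : n ≠ 0) (hnk : n < k) :
    raiseTop (k - n) t ≠ Pi.single 0 k := by
  intro h
  have h1 := raiseTop_apply_raisedIndex ht hn hnk
  have hpos : (raisedIndex (k - n) t : ℕ) ≠ 0 := by rw [val_raisedIndex ht hn hnk]; omega
  rw [h, Pi.single_apply, if_neg (Fin.val_ne_iff.1 hpos)] at h1
  exact zero_ne_one h1

end RaiseTop

theorem poissonOrderH_add_le {lam : ℝ} (hlam : 0 ≤ lam) {n : ℕ} (hn : n ≠ 0) (hnk : n < k) :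
    poissonOrderH k n lam + lam ^ k / k ! ≤ poissonOrderH k k lam := by
  have : NeZero k := ⟨by omega⟩
  have hones : Pi.single 0 k ∉ (tuples k n).image (raiseTop (k - n)) := by
    simp only [mem_image, mem_tuples, not_exists, not_and]
    exact fun t ht => raiseTop_ne_single_zero ht hn hnk
  have hsub : insert (Pi.single 0 k) ((tuples k n).image (raiseTop (k - n))) ⊆ tuples k k := by
    refine insert_subset (mem_tuples.2 ?_) fun u hu => ?_
    · simp [tupleWeight_single]
    · obtain ⟨t, ht, rfl⟩ := mem_image.1 hu
      exact mem_tuples.2 (tupleWeight_raiseTop (mem_tuples.1 ht) hn hnk)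
  rw [poissonOrderH_eq_sum, poissonOrderH_eq_sum, ← tupleTerm_single lam (0 : Fin k)]
  calc ∑ t ∈ tuples k n, tupleTerm lam t + tupleTerm lam (Pi.single 0 k)
      ≤ ∑ t ∈ tuples k n, tupleTerm lam (raiseTop (k - n) t)
          + tupleTerm lam (Pi.single 0 k) := by
        gcongr with t ht
        exact tupleTerm_le_tupleTerm_raiseTop hlam (mem_tuples.1 ht) hn hnk
    _ = ∑ u ∈ insert (Pi.single 0 k) ((tuples k n).image (raiseTop (k - n))), tupleTerm lam u := by
        rw [sum_insert hones, sum_image (raiseTop_injOn hn hnk), add_comm]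
    _ ≤ ∑ u ∈ tuples k k, tupleTerm lam u :=
        sum_le_sum_of_subset_of_nonneg hsub fun u _ _ => tupleTerm_nonneg hlam u

end PoissonOrder

open PoissonOrder in
theorem stmt_6 (k : ℕ) (hk : 2 ≤ k) (lam : ℝ) (hlam : 0 < lam)
    (m : ℕ) (hm : 1 ≤ m) (h0 : IsMode k lam 0) (hmm : IsMode k lam m) :
    k ≤ m ∧ m < k * (k + 1) / 2 := by
  have hle_one : ∀ n, poissonOrderH k n lam ≤ 1 := fun n => by
    simpa [poissonOrderH_zero] using h0.poissonOrderH_le n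
  have hm_eq : poissonOrderH k m lam = 1 :=
    (hle_one m).antisymm (by simpa [poissonOrderH_zero] using hmm.poissonOrderH_le 0)
  have hgap : 0 < lam ^ k / k.factorial := by positivity
  have hlam_lt : lam < 1 := by
    have hone : lam ≤ poissonOrderH k 1 lam := by
      simpa [tupleTerm_single, tupleWeight_single] using
        tupleTerm_le_poissonOrderH hlam.le (Pi.single (⟨0, by omega⟩ : Fin k) 1)
    linarith [poissonOrderH_add_le hlam.le one_ne_zero hk, hle_one k]
  refine ⟨not_lt.1 fun hmk => ?_, ?_⟩
  · linarith [poissonOrderH_add_le hlam.le (by omega) hmk, hle_one k]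
  · have hrec := natCast_mul_poissonOrderH_le_of_le_one hlam.le hle_one m
    rw [hm_eq, mul_one] at hrec
    have hκ : (0 : ℝ) < (k * (k + 1) / 2 : ℕ) := by
      exact_mod_cast Nat.div_pos (by nlinarith) two_pos
    exact_mod_cast (by nlinarith : (m : ℝ) < (k * (k + 1) / 2 : ℕ))
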